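/- arXiv:2601.11839 — 2 statements merged into one kernel-verified Lean document; each statement's English description precedes it below -/
import Mathlib

section
/- Let L be a lattice in R^n with dual lattice L*, and let Y ⊆ R^n be an open set such that (Y+ν) ∩ (Y+κ) = ∅ for all distinct ν, κ ∈ L*. If g ∈ L^1(R^n) vanishes a.e. on R^n \ Y and ĝ(ℓ) = 0 for all ℓ ∈ L, then g = 0 a.e. -/
/-!
With `e x = Bᵀ x`, the map `x ↦ e x mod ℤⁿ` identifies `ℝⁿ / L*` with the torus `𝕋ⁿ`
(`latticePoint e` parametrises `L* = e⁻¹ ℤⁿ`) and pulls the character `mFourier k` back to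
`x ↦ exp (2πi (B k)·x)`. So `φ ↦ ∫ φ (x mod L*) g x dx` is a bounded functional on `C(𝕋ⁿ)` that
kills every character, hence vanishes by Stone–Weierstrass. For a test function `ψ` supported
in `Y`, its `L*`-periodization descends to the torus and agrees with `ψ` on `Y`, because the
translates of `Y` are disjoint; since `g` vanishes off `Y`, this gives `∫ ψ g = 0`, so `g = 0`
almost everywhere on `Y`, and hence everywhere.
-/

open MeasureTheory Matrix Set

noncomputable section

/-- The Fourier transform with the convention `ĝ(ω) = ∫ g(x) e^{2πi ω·x} dx`. -/
def fourierT {n : ℕ} (g : (Fin n → ℝ) → ℂ) (ω : Fin n → ℝ) : ℂ :=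
  ∫ x : Fin n → ℝ, g x * Complex.exp (2 * Real.pi * Complex.I * (∑ i, ω i * x i))

open Filter Function Topology UnitAddTorus

section Lattice

variable {E ι : Type*} [NormedAddCommGroup E] [NormedSpace ℝ E] (e : E ≃L[ℝ] (ι → ℝ))

def torusProj : C(E, UnitAddTorus ι) where
  toFun x i := (e x i : UnitAddCircle)
  continuous_toFun := by
    refine continuous_pi fun i => continuous_quotient_mk'.comp ?_
    fun_prop

def latticePoint : (ι → ℤ) →+ E :=
  (e.symm : (ι → ℝ) →+ E).comp (AddMonoidHom.compLeft (Int.castAddHom ℝ) ι)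

lemma latticePoint_apply (k : ι → ℤ) : latticePoint e k = e.symm fun i => (k i : ℝ) := rfl

lemma torusProj_add_latticePoint (x : E) (k : ι → ℤ) :
    torusProj e (x + latticePoint e k) = torusProj e x := by
  funext i
  simp [torusProj, latticePoint_apply]

lemma exists_latticePoint_of_torusProj_eq {x y : E} (h : torusProj e x = torusProj e y) :
    ∃ k, y = x + latticePoint e k := by
  have hcoord : ∀ i, ∃ m : ℤ, (m : ℝ) = e y i - e x i := by
    intro i
    have hi := congrFun h i
    simp only [torusProj, ContinuousMap.coe_mk] at hi
    have hzero : ((e y i - e x i : ℝ) : UnitAddCircle) = 0 := by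
      rw [AddCircle.coe_sub, hi, sub_self]
    obtain ⟨m, hm⟩ := (AddCircle.coe_eq_zero_iff 1).mp hzero
    exact ⟨m, by simpa using hm⟩
  choose k hk using hcoord
  refine ⟨k, e.injective ?_⟩
  funext i
  simp [latticePoint_apply, hk]

lemma isOpenMap_torusProj : IsOpenMap (torusProj e) :=
  (IsOpenMap.piMap (fun _ => QuotientAddGroup.isOpenMap_coe)
    (Eventually.of_forall fun _ => QuotientAddGroup.mk_surjective)).comp e.isOpenMap

lemma surjective_torusProj : Surjective (torusProj e) := by
  intro z
  choose a ha using fun i => QuotientAddGroup.mk_surjective (z i)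
  exact ⟨e.symm a, funext fun i => by simp [torusProj, ha]⟩

lemma isQuotientMap_torusProj : IsQuotientMap (torusProj e) :=
  (isOpenMap_torusProj e).isQuotientMap (torusProj e).continuous (surjective_torusProj e)

lemma mFourier_torusProj [Fintype ι] (k : ι → ℤ) (x : E) :
    mFourier k (torusProj e x) =
      Complex.exp (2 * Real.pi * Complex.I * ∑ i, (k i : ℂ) * e x i) := by
  simp only [mFourier, torusProj, ContinuousMap.coe_mk, fourier_coe_apply, Finset.mul_sum,
    ← Complex.exp_sum]
  congr 1
  refine Finset.sum_congr rfl fun i _ => ?_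
  push_cast
  ring

lemma tendsto_latticePoint_cofinite_cocompact [Finite ι] :
    Tendsto (latticePoint e) cofinite (cocompact E) := by
  have hcast : Tendsto (fun k : ι → ℤ => fun i => (k i : ℝ)) cofinite (cocompact (ι → ℝ)) := by
    simpa only [coprodᵢ_cofinite, coprodᵢ_cocompact] using
      Tendsto.pi_map_coprodᵢ fun _ : ι => Int.tendsto_coe_cofinite
  exact e.symm.toHomeomorph.isClosedEmbedding.tendsto_cocompact.comp hcast

end Lattice

section Periodization

variable {E ι F : Type*} [NormedAddCommGroup E] [NormedSpace ℝ E] [AddCommMonoid F]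
  (e : E ≃L[ℝ] (ι → ℝ))

def periodize (ψ : E → F) (x : E) : F := ∑ᶠ k, ψ (x + latticePoint e k)

lemma locallyFinite_support_comp_add_latticePoint [FiniteDimensional ℝ E] [Finite ι]
    [TopologicalSpace F] {ψ : E → F} (hψ : HasCompactSupport ψ) :
    LocallyFinite fun k => support fun x => ψ (x + latticePoint e k) := by
  intro x₀
  obtain ⟨K, hK, hKx₀⟩ := exists_compact_mem_nhds x₀
  refine ⟨K, hKx₀, (tendsto_cofinite_cocompact_iff.mp (tendsto_latticePoint_cofinite_cocompact e)
    _ (IsCompact.add hψ hK.neg)).subset ?_⟩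
  rintro k ⟨x, hx, hxK⟩
  exact ⟨x + latticePoint e k, subset_tsupport _ hx, -x, by simpa using hxK,
    add_neg_cancel_comm _ _⟩

lemma continuous_periodize [FiniteDimensional ℝ E] [Finite ι] [TopologicalSpace F]
    [ContinuousAdd F] {ψ : E → F} (hψ : Continuous ψ) (hψc : HasCompactSupport ψ) :
    Continuous (periodize e ψ) :=
  continuous_finsum (fun _ => hψ.comp (continuous_add_const _))
    (locallyFinite_support_comp_add_latticePoint e hψc)

lemma periodize_add_latticePoint (ψ : E → F) (x : E) (k : ι → ℤ) :
    periodize e ψ (x + latticePoint e k) = periodize e ψ x := by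
  unfold periodize
  conv_rhs => rw [← finsum_comp_equiv (Equiv.addLeft k)]
  simp only [Equiv.coe_addLeft, map_add, add_assoc]

lemma periodize_eq_of_mem {Y : Set E} (hY : ∀ x ∈ Y, ∀ k, x + latticePoint e k ∈ Y → k = 0)
    {ψ : E → F} (hψY : support ψ ⊆ Y) {x : E} (hx : x ∈ Y) : periodize e ψ x = ψ x := by
  rw [periodize, finsum_eq_single _ 0, map_zero, add_zero]
  intro k hk
  by_contra hne
  exact hk (hY x hx k (hψY hne))

lemma exists_continuousMap_torusProj_eq [FiniteDimensional ℝ E] [Finite ι] [TopologicalSpace F]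
    [ContinuousAdd F] {Y : Set E} (hY : ∀ x ∈ Y, ∀ k, x + latticePoint e k ∈ Y → k = 0) {ψ : E → F}
    (hψ : Continuous ψ) (hψc : HasCompactSupport ψ) (hψY : support ψ ⊆ Y) :
    ∃ φ : C(UnitAddTorus ι, F), ∀ x ∈ Y, φ (torusProj e x) = ψ x := by
  let Φ : C(E, F) := ⟨periodize e ψ, continuous_periodize e hψ hψc⟩
  have hΦ : FactorsThrough Φ (torusProj e) := by
    intro x y hxy
    obtain ⟨k, rfl⟩ := exists_latticePoint_of_torusProj_eq e hxy
    exact (periodize_add_latticePoint e ψ x k).symm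
  refine ⟨(isQuotientMap_torusProj e).lift Φ hΦ, fun x hx => ?_⟩
  rw [← periodize_eq_of_mem e hY hψY hx]
  exact DFunLike.congr_fun ((isQuotientMap_torusProj e).lift_comp Φ hΦ) x

end Periodization

lemma integral_comp_mul_eq_zero_of_forall_mFourier {X ι : Type*} [TopologicalSpace X]
    [MeasurableSpace X] [OpensMeasurableSpace X] [Fintype ι] {μ : Measure X} {g : X → ℂ}
    (hg : Integrable g μ) (p : C(X, UnitAddTorus ι))
    (h : ∀ k, ∫ x, mFourier k (p x) * g x ∂μ = 0) (φ : C(UnitAddTorus ι, ℂ)) :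
    ∫ x, φ (p x) * g x ∂μ = 0 := by
  have hint (φ : C(UnitAddTorus ι, ℂ)) : Integrable (fun x => φ (p x) * g x) μ :=
    hg.bdd_mul (φ.continuous.comp p.continuous).aestronglyMeasurable
      (Eventually.of_forall fun x => φ.norm_coe_le_norm (p x))
  let Λ : C(UnitAddTorus ι, ℂ) →L[ℂ] ℂ := LinearMap.mkContinuous
    { toFun := fun φ => ∫ x, φ (p x) * g x ∂μ
      map_add' := fun φ ψ => by
        simp only [ContinuousMap.add_apply, add_mul]
        exact integral_add (hint φ) (hint ψ)
      map_smul' := fun c φ => by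
        simp only [ContinuousMap.smul_apply, smul_eq_mul, mul_assoc, RingHom.id_apply]
        exact integral_const_mul c _ }
    (∫ x, ‖g x‖ ∂μ) fun φ => calc
      ‖∫ x, φ (p x) * g x ∂μ‖ ≤ ∫ x, ‖φ‖ * ‖g x‖ ∂μ :=
        norm_integral_le_of_norm_le (hg.norm.const_mul _) (Eventually.of_forall fun x => by
          rw [norm_mul]; gcongr; exact φ.norm_coe_le_norm _)
      _ = (∫ x, ‖g x‖ ∂μ) * ‖φ‖ := by rw [integral_const_mul, mul_comm]
  have hΛ : Λ = 0 := ContinuousLinearMap.ext_on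
    (Submodule.dense_iff_topologicalClosure_eq_top.mpr span_mFourier_closure_eq_top)
    (by rintro _ ⟨k, rfl⟩; exact h k)
  exact congr($hΛ φ)

lemma ae_eq_zero_of_integral_comp_torusProj_mul_eq_zero {E ι : Type*} [NormedAddCommGroup E]
    [NormedSpace ℝ E] [FiniteDimensional ℝ E] [Finite ι] [MeasurableSpace E] [BorelSpace E]
    {μ : Measure E} (e : E ≃L[ℝ] (ι → ℝ)) {Y : Set E} (hYo : IsOpen Y)
    (hY : ∀ x ∈ Y, ∀ k, x + latticePoint e k ∈ Y → k = 0) {g : E → ℂ}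
    (hg : LocallyIntegrable g μ) (hgY : ∀ᵐ x ∂μ, x ∉ Y → g x = 0)
    (h : ∀ φ : C(UnitAddTorus ι, ℂ), ∫ x, φ (torusProj e x) * g x ∂μ = 0) :
    ∀ᵐ x ∂μ, g x = 0 := by
  have hgY' : ∀ᵐ x ∂μ, x ∈ Y → g x = 0 := by
    refine hYo.ae_eq_zero_of_integral_contDiff_smul_eq_zero (hg.locallyIntegrableOn Y)
      fun ψ hψ hψc hψY => ?_
    obtain ⟨φ, hφ⟩ := exists_continuousMap_torusProj_eq e hY
      (Complex.continuous_ofReal.comp hψ.continuous) (hψc.comp_left Complex.ofReal_zero)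
      fun x hx => hψY (subset_tsupport _ (by simpa using hx))
    rw [← h φ]
    refine integral_congr_ae ?_
    filter_upwards [hgY] with x hx
    by_cases hxY : x ∈ Y
    · simp [hφ x hxY, Complex.real_smul]
    · simp [hx hxY]
  filter_upwards [hgY', hgY] with x h₁ h₂ using (em (x ∈ Y)).elim h₁ h₂

theorem statement3 (n : ℕ) (B : Matrix (Fin n) (Fin n) ℝ) (hB : IsUnit B.det)
    (Y : Set (Fin n → ℝ)) (hY : IsOpen Y)
    (hdisj : ∀ k k' : Fin n → ℤ, k ≠ k' →
      Disjoint ((fun θ => θ + (B⁻¹)ᵀ.mulVec fun i => (k i : ℝ)) '' Y)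
        ((fun θ => θ + (B⁻¹)ᵀ.mulVec fun i => (k' i : ℝ)) '' Y))
    (g : (Fin n → ℝ) → ℂ) (hg : Integrable g)
    (hsupp : ∀ᵐ θ : Fin n → ℝ, θ ∉ Y → g θ = 0)
    (hFT : ∀ k : Fin n → ℤ, fourierT g (B.mulVec fun i => (k i : ℝ)) = 0) :
    ∀ᵐ θ : Fin n → ℝ, g θ = 0 := by
  have hBB : (B⁻¹)ᵀ * Bᵀ = 1 := by rw [← transpose_mul, mul_nonsing_inv B hB, transpose_one]
  have hBB' : Bᵀ * (B⁻¹)ᵀ = 1 := by rw [← transpose_mul, nonsing_inv_mul B hB, transpose_one]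
  let e : (Fin n → ℝ) ≃L[ℝ] (Fin n → ℝ) := (toLin'OfInv hBB hBB').toContinuousLinearEquiv
  have hlattice (k : Fin n → ℤ) : latticePoint e k = (B⁻¹)ᵀ *ᵥ fun i => (k i : ℝ) := rfl
  have hY' : ∀ x ∈ Y, ∀ k, x + latticePoint e k ∈ Y → k = 0 := by
    intro x hx k hxk
    by_contra hk
    refine Set.disjoint_left.mp (hdisj k 0 hk) ⟨x, hx, rfl⟩ ⟨_, hxk, ?_⟩
    simp [hlattice, ← Pi.zero_def]
  have hchar (k : Fin n → ℤ) : ∫ x, mFourier k (torusProj e x) * g x = 0 := by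
    rw [← hFT k, fourierT]
    congr 1 with x
    have hdot : ∑ i, (k i : ℝ) * (Bᵀ *ᵥ x) i = ∑ i, (B *ᵥ fun i => (k i : ℝ)) i * x i := by
      simpa [dotProduct, vecMul_transpose] using dotProduct_mulVec (fun i => (k i : ℝ)) Bᵀ x
    rw [mFourier_torusProj, mul_comm]
    congr 3
    exact_mod_cast congrArg Complex.ofReal hdot
  exact ae_eq_zero_of_integral_comp_torusProj_mul_eq_zero e hY hY' hg.locallyIntegrable hsupp
    (integral_comp_mul_eq_zero_of_forall_mFourier hg (torusProj e) hchar)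

end
end

section
/- Let J and K be measurable range functions for a separable Hilbert space H based on a measure space (X,Σ,μ). Then M_J = M_K if and only if J(x) = K(x) for μ-almost every x ∈ X. -/
/-!
If `M_J ⊆ M_K`, test it on the functions `x ↦ P_{J(x)} ξ` cut off to sets of finite measure:
they lie in `M_J`, so `P_{J(x)} ξ ∈ K(x)` a.e., simultaneously for all `ξ` in a countable dense
subset of `H`, and then `J(x) ≤ K(x)` by continuity of `P_{J(x)}`. These functions are in `L²`
because they are bounded and, by Pettis' argument (expand in a Hilbert basis, which is countable
since `H` is separable), weak measurability makes them strongly measurable.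
-/

open MeasureTheory Filter

theorem Orthonormal.countable {𝕜 E ι : Type*} [RCLike 𝕜] [NormedAddCommGroup E]
    [InnerProductSpace 𝕜 E] [TopologicalSpace.SeparableSpace E] {v : ι → E}
    (hv : Orthonormal 𝕜 v) : Countable ι := by
  refine Pairwise.countable_of_isOpen_disjoint (s := fun i => Metric.ball (v i) (1 / 2))
    (fun i j hij => Metric.ball_disjoint_ball ?_) (fun _ => Metric.isOpen_ball)
    (fun i => ⟨v i, Metric.mem_ball_self (by norm_num)⟩)
  have hdist : ‖v i - v j‖ ^ 2 = 2 := by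
    rw [@norm_sub_sq 𝕜, hv.1 i, hv.1 j, hv.2 hij]
    norm_num
  rw [dist_eq_norm]
  nlinarith [norm_nonneg (v i - v j)]

theorem stronglyMeasurable_of_measurable_inner {𝕜 E X : Type*} [RCLike 𝕜]
    [NormedAddCommGroup E] [InnerProductSpace 𝕜 E] [CompleteSpace E]
    [SecondCountableTopology E] [MeasurableSpace X] {f : X → E}
    (hf : ∀ η, Measurable fun x => inner 𝕜 (f x) η) : StronglyMeasurable f := by
  obtain ⟨w, b, -⟩ := exists_hilbertBasis 𝕜 E
  have := b.orthonormal.countable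
  have hcoeff : ∀ i, Measurable fun x => b.repr (f x) i := fun i => by
    simp_rw [b.repr_apply_apply, ← inner_conj_symm (b i)]
    exact RCLike.continuous_conj.measurable.comp (hf (b i))
  refine stronglyMeasurable_of_tendsto atTop (fun t => ?_)
    (tendsto_pi_nhds.2 fun x => b.hasSum_repr (f x))
  exact Finset.stronglyMeasurable_fun_sum _ fun i _ =>
    (hcoeff i).stronglyMeasurable.smul_const (b i)

theorem Submodule.isClosed_of_hasOrthogonalProjection {𝕜 E : Type*} [RCLike 𝕜]
    [NormedAddCommGroup E] [InnerProductSpace 𝕜 E] (K : Submodule 𝕜 E)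
    [K.HasOrthogonalProjection] : IsClosed (K : Set E) :=
  K.orthogonal_orthogonal ▸ Kᗮ.isClosed_orthogonal

theorem Submodule.le_of_forall_starProjection_mem_of_dense {𝕜 E : Type*} [RCLike 𝕜]
    [NormedAddCommGroup E] [InnerProductSpace 𝕜 E] {U V : Submodule 𝕜 E}
    [U.HasOrthogonalProjection] (hV : IsClosed (V : Set E)) {D : Set E} (hD : Dense D)
    (hUV : ∀ ξ ∈ D, U.starProjection ξ ∈ V) : U ≤ V := by
  intro v hv
  have hclosed : IsClosed {ξ | U.starProjection ξ ∈ V} :=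
    hV.preimage U.starProjection.continuous
  have hvV : U.starProjection v ∈ V :=
    hclosed.closure_subset_iff.2 hUV (hD.closure_eq ▸ Set.mem_univ v)
  rwa [U.starProjection_eq_self_iff.2 hv] at hvV

/-- The space `M_J`. -/
def rangeSpace {X 𝕜 H : Type*} [MeasurableSpace X] [RCLike 𝕜] [NormedAddCommGroup H]
    [InnerProductSpace 𝕜 H] (μ : Measure X) (p : ENNReal) (J : X → Submodule 𝕜 H) :
    Set (Lp H p μ) :=
  {F | ∀ᵐ x ∂μ, (F : X → H) x ∈ J x}

section RangeSpace

variable {X 𝕜 H : Type*} [MeasurableSpace X] [RCLike 𝕜] [NormedAddCommGroup H]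
  [InnerProductSpace 𝕜 H] {μ : Measure X} {p : ENNReal} {J K : X → Submodule 𝕜 H}

theorem ae_mem_of_rangeSpace_subset [SigmaFinite μ] (hJK : rangeSpace μ p J ⊆ rangeSpace μ p K)
    {g : X → H} (hg : AEStronglyMeasurable g μ) {C : ℝ} (hgC : ∀ x, ‖g x‖ ≤ C)
    (hgJ : ∀ x, g x ∈ J x) : ∀ᵐ x ∂μ, g x ∈ K x := by
  refine ae_of_forall_measure_lt_top_ae_restrict _ fun s hs hμs => ?_
  have hmem : MemLp (s.indicator g) p μ := by
    rw [memLp_indicator_iff_restrict hs]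
    have : IsFiniteMeasure (μ.restrict s) := ⟨by rwa [Measure.restrict_apply_univ]⟩
    exact MemLp.of_bound hg.restrict C (Eventually.of_forall hgC)
  have hJ : hmem.toLp _ ∈ rangeSpace μ p J := by
    filter_upwards [hmem.coeFn_toLp] with x hx
    rw [hx]
    by_cases hxs : x ∈ s
    · simpa [hxs] using hgJ x
    · simp [hxs]
  rw [ae_restrict_iff' hs]
  filter_upwards [hJK hJ, hmem.coeFn_toLp] with x hxK hx hxs
  rwa [hx, Set.indicator_of_mem hxs] at hxK

theorem ae_le_of_rangeSpace_subset [SigmaFinite μ] [CompleteSpace H] [SecondCountableTopology H]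
    [∀ x, (J x).HasOrthogonalProjection]
    (hJ : ∀ ξ η, Measurable fun x => inner 𝕜 ((J x).starProjection ξ) η)
    (hK : ∀ x, IsClosed (K x : Set H)) (hJK : rangeSpace μ p J ⊆ rangeSpace μ p K) :
    ∀ᵐ x ∂μ, J x ≤ K x := by
  obtain ⟨D, hDc, hD⟩ := TopologicalSpace.exists_countable_dense H
  have hproj : ∀ ξ, ∀ᵐ x ∂μ, (J x).starProjection ξ ∈ K x := fun ξ =>
    ae_mem_of_rangeSpace_subset hJK
      (stronglyMeasurable_of_measurable_inner (hJ ξ)).aestronglyMeasurable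
      (fun x => (J x).norm_starProjection_apply_le ξ) (fun x => (J x).starProjection_apply_mem ξ)
  filter_upwards [(ae_ball_iff hDc).2 fun ξ _ => hproj ξ] with x hx
  exact Submodule.le_of_forall_starProjection_mem_of_dense (hK x) hD hx

end RangeSpace

theorem statement14 {X : Type*} [MeasurableSpace X] (μ : Measure X) [SigmaFinite μ]
    {H : Type*} [NormedAddCommGroup H] [InnerProductSpace ℂ H] [CompleteSpace H]
    [SecondCountableTopology H]
    (J K : X → Submodule ℂ H)
    (hJcl : ∀ x, Submodule.HasOrthogonalProjection (J x))
    (hKcl : ∀ x, Submodule.HasOrthogonalProjection (K x))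
    (hJmeas : ∀ ξ η : H, Measurable fun x =>
      @inner ℂ H _ ((J x).subtypeL (@Submodule.orthogonalProjectionOnto ℂ H _ _ _ (J x) (hJcl x) ξ)) η)
    (hKmeas : ∀ ξ η : H, Measurable fun x =>
      @inner ℂ H _ ((K x).subtypeL (@Submodule.orthogonalProjectionOnto ℂ H _ _ _ (K x) (hKcl x) ξ)) η) :
    {F : Lp H 2 μ | ∀ᵐ x ∂μ, (F : X → H) x ∈ J x} =
      {F : Lp H 2 μ | ∀ᵐ x ∂μ, (F : X → H) x ∈ K x} ↔
    ∀ᵐ x ∂μ, J x = K x := by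
  constructor
  · intro h
    have := hJcl
    have := hKcl
    filter_upwards
      [ae_le_of_rangeSpace_subset hJmeas (fun x => (K x).isClosed_of_hasOrthogonalProjection)
        h.subset,
      ae_le_of_rangeSpace_subset hKmeas (fun x => (J x).isClosed_of_hasOrthogonalProjection)
        h.superset] with x hJK hKJ
    exact le_antisymm hJK hKJ
  · intro h
    exact Set.ext fun F => eventually_congr (h.mono fun x hx => by rw [hx])
end
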